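/- arXiv:2504.20333 — 4 statements merged into one kernel-verified Lean document; each statement's English description precedes it below -/
import Mathlib

section
/- (Existential weak regularity for subgraphs) Let $G=(L,R,E)$ be a bipartite graph and $H$ a subgraph of $G$ (on the same vertex sets, with $E(H) \subseteq E(G)$). For any $\gamma > 0$, there exist $p \le 1/\gamma^2$ triples $(c_i, S_i, T_i) \in \mathbb{R} \times 2^L \times 2^R$ with $\sum_{i=1}^p |c_i| \le 1/\gamma$, such that for every $S \subseteq L$ and $T \subseteq R$: $\big| |E_H(S,T)| - \sum_{i=1}^p c_i \cdot |E_G(S_i \cap S, T_i \cap T)| \big| \le \gamma \cdot |E(G)|$. -/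
open Finset

open scoped Classical

/-- Number of edges of the (sub)graph `P` between `S` and `T`. -/
noncomputable def eCount {L R : Type*} (P : L → R → Prop) (S : Finset L) (T : Finset R) : ℕ :=
  ((S ×ˢ T).filter fun p => P p.1 p.2).card

/-!
The Frieze–Kannan energy-decrement argument, carried out in the Hilbert space `ℝ^(L × R)`.
Encode `H` by its indicator vector `f` and a rectangle `S × T` by the indicator `b_{S,T}` of the
edges of `G` inside it; then `⟪f, b_{S,T}⟫ = |E_H(S,T)|`, `⟪b_{S₀,T₀}, b_{S,T}⟫ =
|E_G(S₀ ∩ S, T₀ ∩ T)|`, and all these vectors have squared norm at most `e = |E(G)|`.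
As long as some `|⟪f, b⟫|` exceeds `γ e`, replacing `f` by `f ∓ γ b` lowers `‖f‖²` by at least
`γ² e`, so the greedy procedure stops after at most `‖f‖² / (γ² e) ≤ 1 / γ²` steps.
-/

section EnergyDecrement

open scoped RealInnerProductSpace

variable {V : Type*} [NormedAddCommGroup V] [InnerProductSpace ℝ V]

theorem exists_abs_eq_norm_sub_smul_sq_le {f b : V} {γ e : ℝ} (hγ : 0 ≤ γ)
    (hb : ‖b‖ ^ 2 ≤ e) (hfb : γ * e < |⟪f, b⟫|) :
    ∃ c : ℝ, |c| = γ ∧ ‖f - c • b‖ ^ 2 ≤ ‖f‖ ^ 2 - γ ^ 2 * e := by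
  obtain ⟨c, hc, hcf⟩ : ∃ c : ℝ, |c| = γ ∧ c * ⟪f, b⟫ = γ * |⟪f, b⟫| := by
    rcases abs_cases ⟪f, b⟫ with ⟨h, -⟩ | ⟨h, -⟩
    · exact ⟨γ, abs_of_nonneg hγ, by rw [h]⟩
    · exact ⟨-γ, by rw [abs_neg, abs_of_nonneg hγ], by rw [h]; ring⟩
  refine ⟨c, hc, ?_⟩
  rw [norm_sub_sq_real, real_inner_smul_right, norm_smul, mul_pow, Real.norm_eq_abs, hc]
  nlinarith [mul_le_mul_of_nonneg_left hfb.le hγ, mul_le_mul_of_nonneg_left hb (sq_nonneg γ)]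

variable {ι : Type*} (b : ι → V) {γ e : ℝ}

theorem exists_greedy_approx (hγ : 0 ≤ γ) (hb : ∀ i, ‖b i‖ ^ 2 ≤ e) (n : ℕ) (f : V)
    (hf : ‖f‖ ^ 2 < n * (γ ^ 2 * e)) :
    ∃ (p : ℕ) (c : Fin p → ℝ) (idx : Fin p → ι), (∀ k, |c k| = γ) ∧
      ‖f - ∑ k, c k • b (idx k)‖ ^ 2 + p * (γ ^ 2 * e) ≤ ‖f‖ ^ 2 ∧
      ∀ i, |⟪f - ∑ k, c k • b (idx k), b i⟫| ≤ γ * e := by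
  induction n generalizing f with
  | zero => simp only [Nat.cast_zero, zero_mul] at hf; linarith [sq_nonneg ‖f‖]
  | succ n ih =>
    by_cases hgood : ∀ i, |⟪f, b i⟫| ≤ γ * e
    · exact ⟨0, Fin.elim0, Fin.elim0, Fin.rec0, by simp, by simpa using hgood⟩
    push Not at hgood
    obtain ⟨i, hi⟩ := hgood
    obtain ⟨c, hc, hdec⟩ := exists_abs_eq_norm_sub_smul_sq_le hγ (hb i) hi
    obtain ⟨p, c', idx, hc', hpot, hcut⟩ := ih (f - c • b i) (by push_cast at hf; linarith)
    have hsum : f - ∑ k, (Fin.cons c c' : Fin (p + 1) → ℝ) k •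
          b ((Fin.cons i idx : Fin (p + 1) → ι) k) = f - c • b i - ∑ k, c' k • b (idx k) := by
      rw [Fin.sum_univ_succ, sub_add_eq_sub_sub]
      simp only [Fin.cons_zero, Fin.cons_succ]
    refine ⟨p + 1, Fin.cons c c', Fin.cons i idx, Fin.forall_fin_succ.2 ⟨hc, hc'⟩, ?_, ?_⟩
    · rw [hsum]; push_cast; linarith
    · rwa [hsum]

theorem exists_weak_approx (hγ : 0 < γ) (he : 0 < e) (hb : ∀ i, ‖b i‖ ^ 2 ≤ e) (f : V)
    (hf : ‖f‖ ^ 2 ≤ e) :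
    ∃ (p : ℕ) (c : Fin p → ℝ) (idx : Fin p → ι), (p : ℝ) ≤ 1 / γ ^ 2 ∧ ∑ k, |c k| ≤ 1 / γ ∧
      ∀ i, |⟪f - ∑ k, c k • b (idx k), b i⟫| ≤ γ * e := by
  have hγe : 0 < γ ^ 2 * e := by positivity
  obtain ⟨n, hn⟩ := exists_nat_gt (‖f‖ ^ 2 / (γ ^ 2 * e))
  obtain ⟨p, c, idx, hc, hpot, hcut⟩ :=
    exists_greedy_approx b hγ.le hb n f ((div_lt_iff₀ hγe).1 hn)
  have hp : (p : ℝ) ≤ 1 / γ ^ 2 := by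
    rw [le_div_iff₀ (by positivity)]
    nlinarith [sq_nonneg ‖f - ∑ k, c k • b (idx k)‖]
  refine ⟨p, c, idx, hp, ?_, hcut⟩
  calc ∑ k, |c k| = p * γ := by simp [hc]
    _ ≤ 1 / γ ^ 2 * γ := by gcongr
    _ = 1 / γ := by field_simp

end EnergyDecrement

theorem eCount_mono {L R : Type*} {P Q : L → R → Prop} (h : ∀ ℓ r, P ℓ r → Q ℓ r) (S : Finset L)
    (T : Finset R) : eCount P S T ≤ eCount Q S T :=
  card_le_card (monotone_filter_right _ fun p _ => h p.1 p.2)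

section EdgeIndicators

open scoped RealInnerProductSpace

variable {L R : Type*} [Fintype L] [Fintype R]

noncomputable def edgeIndicator (P : L → R → Prop) : EuclideanSpace ℝ (L × R) :=
  WithLp.toLp 2 fun p => if P p.1 p.2 then 1 else 0

noncomputable def boxIndicator (G : L → R → Prop) (S : Finset L) (T : Finset R) :
    EuclideanSpace ℝ (L × R) :=
  edgeIndicator fun ℓ r => G ℓ r ∧ ℓ ∈ S ∧ r ∈ T

theorem eCount_eq_card (P : L → R → Prop) (S : Finset L) (T : Finset R) :
    eCount P S T = #{p : L × R | P p.1 p.2 ∧ p.1 ∈ S ∧ p.2 ∈ T} := by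
  unfold eCount
  congr 1
  ext p
  simp [and_comm]

theorem inner_edgeIndicator (P Q : L → R → Prop) :
    ⟪edgeIndicator P, edgeIndicator Q⟫ = #{p : L × R | P p.1 p.2 ∧ Q p.1 p.2} := by
  rw [PiLp.inner_apply, ← sum_boole]
  refine sum_congr rfl fun p _ => ?_
  by_cases hP : P p.1 p.2 <;> by_cases hQ : Q p.1 p.2 <;> simp [edgeIndicator, hP, hQ]

theorem norm_edgeIndicator_sq_le {P G : L → R → Prop} (h : ∀ ℓ r, P ℓ r → G ℓ r) :
    ‖edgeIndicator P‖ ^ 2 ≤ eCount G univ univ := by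
  calc ‖edgeIndicator P‖ ^ 2 = eCount P univ univ := by
        rw [← real_inner_self_eq_norm_sq, inner_edgeIndicator, eCount_eq_card]
        simp
    _ ≤ eCount G univ univ := by exact_mod_cast eCount_mono h univ univ

theorem inner_edgeIndicator_boxIndicator {P G : L → R → Prop} (h : ∀ ℓ r, P ℓ r → G ℓ r)
    (S : Finset L) (T : Finset R) :
    ⟪edgeIndicator P, boxIndicator G S T⟫ = eCount P S T := by
  rw [boxIndicator, inner_edgeIndicator, eCount_eq_card]
  congr 3
  ext p
  constructor
  · exact fun ⟨hP, _, hS, hT⟩ => ⟨hP, hS, hT⟩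
  · exact fun ⟨hP, hS, hT⟩ => ⟨hP, h _ _ hP, hS, hT⟩

theorem inner_boxIndicator (G : L → R → Prop) (S₀ S : Finset L) (T₀ T : Finset R) :
    ⟪boxIndicator G S₀ T₀, boxIndicator G S T⟫ = eCount G (S₀ ∩ S) (T₀ ∩ T) := by
  rw [boxIndicator, inner_edgeIndicator_boxIndicator (fun _ _ h => h.1), eCount_eq_card,
    eCount_eq_card]
  simp only [mem_inter]
  congr 3
  ext p
  tauto

end EdgeIndicators

/-- Existential weak regularity lemma for subgraphs: for any bipartite graph `G` with at least
one edge, any subgraph `H` of `G`, and any `γ > 0`, there exist `p ≤ 1/γ²` triples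
`(cᵢ, Sᵢ, Tᵢ)` with `∑ᵢ |cᵢ| ≤ 1/γ` such that for all `S ⊆ L`, `T ⊆ R`,
`| |E_H(S,T)| - ∑ᵢ cᵢ |E_G(Sᵢ ∩ S, Tᵢ ∩ T)| | ≤ γ |E(G)|`. -/
theorem existential_weak_regularity {L R : Type*} [Fintype L] [Fintype R]
    (G H : L → R → Prop) (hsub : ∀ ℓ r, H ℓ r → G ℓ r)
    (hedge : 1 ≤ eCount G Finset.univ Finset.univ)
    (γ : ℝ) (hγ : 0 < γ) :
    ∃ (p : ℕ) (c : Fin p → ℝ) (Sc : Fin p → Finset L) (Tc : Fin p → Finset R),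
      (p : ℝ) ≤ 1 / γ ^ 2 ∧
      (∑ i, |c i|) ≤ 1 / γ ∧
      ∀ (S : Finset L) (T : Finset R),
        |(eCount H S T : ℝ) - ∑ i, c i * (eCount G (Sc i ∩ S) (Tc i ∩ T) : ℝ)| ≤
          γ * (eCount G Finset.univ Finset.univ : ℝ) := by
  obtain ⟨p, c, idx, hp, hc, hcut⟩ :=
    exists_weak_approx (fun i : Finset L × Finset R => boxIndicator G i.1 i.2) hγ
      (Nat.cast_pos.2 hedge) (fun _ => norm_edgeIndicator_sq_le fun _ _ h => h.1)
      (edgeIndicator H) (norm_edgeIndicator_sq_le hsub)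
  refine ⟨p, c, fun k => (idx k).1, fun k => (idx k).2, hp, hc, fun S T => ?_⟩
  simpa only [inner_sub_left, sum_inner, real_inner_smul_left, inner_boxIndicator,
    inner_edgeIndicator_boxIndicator hsub] using hcut (S, T)
end

section
/- (Energy decrement step) Let $G=(L,R,E)$ be a bipartite graph with $m = |E(G)| \ge 1$, and let $M \in \mathbb{R}^{L \times R}$ be a matrix supported on $E(G)$. Suppose $S \subseteq L$, $T \subseteq R$ satisfy $|\mathbf{1}_S^{\mathsf T} M \mathbf{1}_T| > \gamma m$ for some $\gamma > 0$. Define $c = \gamma \cdot \mathrm{sgn}(\mathbf{1}_S^{\mathsf T} M \mathbf{1}_T)$ and $M' = M - c \cdot (\mathbf{1}_S \mathbf{1}_T^{\mathsf T} \circ A_G)$, where $\circ$ is the entrywise product with the biadjacency matrix of $G$. Then $\|M\|_{\mu_G}^2 - \|M'\|_{\mu_G}^2 \ge \gamma^2$, where $\|N\|_{\mu_G}^2 = \frac{1}{m}\sum_{(\ell,r) \in E(G)} N_{\ell r}^2$. -/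
open Finset

open scoped Classical

/-- Energy decrement step of the weak regularity lemma: if `M` is a matrix supported on the
edges of a bipartite graph `G` with `m ≥ 1` edges and `|1_Sᵀ M 1_T| > γ m`, then subtracting
`c · (1_S 1_Tᵀ ∘ A_G)` with `c = γ · sgn(1_Sᵀ M 1_T)` decreases the squared `L²(μ_G)` norm by
at least `γ²`. -/
theorem energy_decrement_step {L R : Type*} [Fintype L] [Fintype R]
    (G : L → R → Prop) (M : L → R → ℝ)
    (hsupp : ∀ ℓ r, ¬ G ℓ r → M ℓ r = 0)
    (m : ℕ) (hm : m = eCount G Finset.univ Finset.univ) (hm1 : 1 ≤ m)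
    (S : Finset L) (T : Finset R) (γ : ℝ) (hγ : 0 < γ)
    (hbig : γ * m < |∑ ℓ ∈ S, ∑ r ∈ T, M ℓ r|) :
    γ ^ 2 ≤
      (∑ ℓ, ∑ r, if G ℓ r then (M ℓ r) ^ 2 else 0) / m -
        (∑ ℓ, ∑ r, if G ℓ r then
            (M ℓ r - (γ * Real.sign (∑ ℓ' ∈ S, ∑ r' ∈ T, M ℓ' r')) *
              (if ℓ ∈ S ∧ r ∈ T ∧ G ℓ r then 1 else 0)) ^ 2
          else 0) / m := by
  set σ := ∑ ℓ ∈ S, ∑ r ∈ T, M ℓ r with hσdef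
  set c := γ * Real.sign σ with hc
  have hmpos : (0:ℝ) < m := by exact_mod_cast hm1
  have hσpos : 0 < |σ| := lt_trans (by positivity) hbig
  have hσne : σ ≠ 0 := by
    intro h; rw [h] at hσpos; simp at hσpos
  have hsign : Real.sign σ * σ = |σ| := by
    rcases lt_or_gt_of_ne hσne with h | h
    · rw [Real.sign_of_neg h, abs_of_neg h]; ring
    · rw [Real.sign_of_pos h, abs_of_pos h]; ring
  have hsign2 : Real.sign σ ^ 2 = 1 := by
    rcases lt_or_gt_of_ne hσne with h | h
    · rw [Real.sign_of_neg h]; ring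
    · rw [Real.sign_of_pos h]; ring
  have hecard : ((eCount G S T : ℝ)) ≤ m := by
    rw [hm]
    have : eCount G S T ≤ eCount G Finset.univ Finset.univ :=
      Finset.card_le_card (Finset.filter_subset_filter _ (Finset.subset_univ _))
    exact_mod_cast this
  -- the indicator sum equals σ
  have hind : (∑ ℓ, ∑ r, (if ℓ ∈ S ∧ r ∈ T ∧ G ℓ r then M ℓ r else 0)) = σ := by
    rw [hσdef]
    rw [← Finset.sum_subset (Finset.subset_univ S) (by intro ℓ _ hℓ; simp [hℓ])]
    refine Finset.sum_congr rfl fun ℓ hℓ => ?_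
    rw [← Finset.sum_subset (Finset.subset_univ T) (by intro r _ hr; simp [hr])]
    refine Finset.sum_congr rfl fun r hr => ?_
    by_cases hg : G ℓ r
    · simp [hℓ, hr, hg]
    · simp [hℓ, hr, hg, hsupp ℓ r hg]
  -- the indicator-count sum equals eCount G S T
  have hcnt : (∑ ℓ, ∑ r, (if ℓ ∈ S ∧ r ∈ T ∧ G ℓ r then (1:ℝ) else 0))
      = (eCount G S T : ℝ) := by
    rw [eCount, Finset.card_filter, Finset.sum_product]
    push_cast
    rw [← Finset.sum_subset (Finset.subset_univ S) (by intro ℓ _ hℓ; simp [hℓ])]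
    refine Finset.sum_congr rfl fun ℓ hℓ => ?_
    rw [← Finset.sum_subset (Finset.subset_univ T) (by intro r _ hr; simp [hr])]
    refine Finset.sum_congr rfl fun r hr => ?_
    simp [hℓ, hr]
  have key : (∑ ℓ, ∑ r, if G ℓ r then (M ℓ r) ^ 2 else 0) -
      (∑ ℓ, ∑ r, if G ℓ r then
          (M ℓ r - c * (if ℓ ∈ S ∧ r ∈ T ∧ G ℓ r then 1 else 0)) ^ 2 else 0)
      = 2 * c * σ - c ^ 2 * (eCount G S T : ℝ) := by
    rw [← hind, ← hcnt]
    simp only [Finset.mul_sum, ← Finset.sum_sub_distrib]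
    refine Finset.sum_congr rfl fun ℓ _ => Finset.sum_congr rfl fun r _ => ?_
    by_cases hg : G ℓ r
    · by_cases hst : ℓ ∈ S ∧ r ∈ T
      · simp only [hg, hst.1, hst.2, and_self, if_true, true_and]; ring
      · have : ¬ (ℓ ∈ S ∧ r ∈ T ∧ G ℓ r) := fun h => hst ⟨h.1, h.2.1⟩
        simp [hg, this, hst]
    · have : ¬ (ℓ ∈ S ∧ r ∈ T ∧ G ℓ r) := fun h => hg h.2.2
      simp [hg, this]
  rw [div_sub_div_same, key, le_div_iff₀ hmpos]
  have hcσ : c * σ = γ * |σ| := by rw [hc, mul_assoc, hsign]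
  have hc2 : c ^ 2 = γ ^ 2 := by rw [hc, mul_pow, hsign2, mul_one]
  rw [hc2]
  nlinarith [hbig, hecard, sq_nonneg γ, hγ.le, mul_le_mul_of_nonneg_left hecard (sq_nonneg γ)]
end

section
/- (Distance of AEL codes) Let $G=(L,R,E)$ be an $(n,d,\lambda)$-expander, ${\mathcal C}_{\mathrm{out}} \subseteq \Sigma_{\mathrm{out}}^L$ an outer code of distance $\delta_{\mathrm{out}}$, and ${\mathcal C}_{\mathrm{in}} \subseteq \Sigma_{\mathrm{in}}^d$ an inner code of distance $\delta_{\mathrm{in}}$, with the AEL code ${\mathcal C}_{\mathrm{AEL}} \subseteq (\Sigma_{\mathrm{in}}^d)^R$ formed by encoding each outer symbol with ${\mathcal C}_{\mathrm{in}}$, writing symbols on edges, and folding at right vertices. Then for any two distinct codewords $h_1, h_2 \in {\mathcal C}_{\mathrm{AEL}}$, the fraction of right vertices where they differ satisfies $\Delta_R(h_1,h_2) \ge \delta_{\mathrm{in}} - \lambda/\delta_{\mathrm{out}}$. -/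
/-!
Let `S` be the set of left vertices where the outer codewords differ and `T` the set of right
vertices where `h₁, h₂` differ. Every `ℓ ∈ S` carries two distinct inner codewords, so at least
`δin d` of its edges go into `T`; hence `e(S, T) ≥ δin d |S|`. The expander mixing lemma bounds
`e(S, T) ≤ (d/n) |S| |T| + λ d n`, so `(δin - |T|/n) |S| ≤ λ n`, and `|S| ≥ δout n` turns this into
`δin - |T|/n ≤ λ / δout`.
-/

open Finset

open scoped Classical

section Counting

variable {L R : Type*}

theorem eCount_eq_sum (P : L → R → Prop) (S : Finset L) (T : Finset R) :
    eCount P S T = ∑ ℓ ∈ S, #{r ∈ T | P ℓ r} := by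
  simp only [eCount, card_filter, sum_product]

theorem mul_card_le_eCount {P : L → R → Prop} {S : Finset L} {T : Finset R} {m : ℝ}
    (h : ∀ ℓ ∈ S, m ≤ #{r ∈ T | P ℓ r}) : m * #S ≤ eCount P S T := by
  rw [eCount_eq_sum, mul_comm, ← nsmul_eq_mul, ← sum_const, Nat.cast_sum]
  exact sum_le_sum h

theorem card_filter_equiv_subtype [Fintype R] {ι : Type*} [Fintype ι] {p : R → Prop}
    (e : ι ≃ {r : R // p r}) (q : R → Prop) : #{i | q (e i)} = #{r | p r ∧ q r} := by
  refine card_bij' (fun i _ => (e i).1) (fun r hr => e.symm ⟨r, (mem_filter.mp hr).2.1⟩)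
    ?_ ?_ ?_ ?_ <;> simp +contextual [(e _).2]

end Counting

section AEL

variable {L R Aout Ain : Type*} {d : ℕ} {G : L → R → Prop}
  {ordL : ∀ ℓ : L, Fin d ≃ {r : R // G ℓ r}} {Enc : Aout → (Fin d → Ain)}
  {h h₁ h₂ : L → R → Ain} {f f₁ f₂ : L → Aout}

theorem apply_eq_enc_symm (henc : ∀ (ℓ : L) (k : Fin d), h ℓ (ordL ℓ k).1 = Enc (f ℓ) k)
    {ℓ : L} {r : R} (hr : G ℓ r) : h ℓ r = Enc (f ℓ) ((ordL ℓ).symm ⟨r, hr⟩) := by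
  simpa using henc ℓ ((ordL ℓ).symm ⟨r, hr⟩)

theorem ne_of_exists_edge_ne
    (henc₁ : ∀ (ℓ : L) (k : Fin d), h₁ ℓ (ordL ℓ k).1 = Enc (f₁ ℓ) k)
    (henc₂ : ∀ (ℓ : L) (k : Fin d), h₂ ℓ (ordL ℓ k).1 = Enc (f₂ ℓ) k)
    (hne : ∃ ℓ r, G ℓ r ∧ h₁ ℓ r ≠ h₂ ℓ r) : f₁ ≠ f₂ := by
  rintro rfl
  obtain ⟨ℓ, r, hr, hdiff⟩ := hne
  exact hdiff (by rw [apply_eq_enc_symm henc₁ hr, apply_eq_enc_symm henc₂ hr])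

theorem card_edge_ne_eq_card_enc_ne [Fintype R]
    (henc₁ : ∀ (ℓ : L) (k : Fin d), h₁ ℓ (ordL ℓ k).1 = Enc (f₁ ℓ) k)
    (henc₂ : ∀ (ℓ : L) (k : Fin d), h₂ ℓ (ordL ℓ k).1 = Enc (f₂ ℓ) k) (ℓ : L) :
    #{r | G ℓ r ∧ h₁ ℓ r ≠ h₂ ℓ r} = #{k | Enc (f₁ ℓ) k ≠ Enc (f₂ ℓ) k} := by
  convert (card_filter_equiv_subtype (ordL ℓ) fun r => h₁ ℓ r ≠ h₂ ℓ r).symm using 3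
  simp only [henc₁, henc₂]

end AEL

theorem sub_div_mul_le_of_mixing_bound {lam δin δout n d s t : ℝ} (hlam : 0 ≤ lam)
    (hδout : 0 < δout) (hn : 0 < n) (hd : 0 < d) (hs : δout * n ≤ s)
    (h : δin * d * s ≤ d / n * s * t + lam * d * n) : (δin - lam / δout) * n ≤ t := by
  set x := δin - t / n
  have hxs : x * s ≤ lam * n := by
    have : d * (x * s) ≤ d * (lam * n) := by
      have : d * (x * s) = δin * d * s - d / n * s * t := by simp only [x]; ring
      linarith
    exact le_of_mul_le_mul_left this hd
  have hx : x ≤ lam / δout := by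
    rw [le_div_iff₀ hδout]
    rcases le_or_gt x 0 with hx | hx
    · nlinarith
    · have : x * δout * n ≤ lam * n := by nlinarith
      exact le_of_mul_le_mul_right this hn
  have : δin - lam / δout ≤ t / n := by simp only [x] at hx; linarith
  rwa [le_div_iff₀ hn] at this

theorem ael_distance_general {L R Aout Ain : Type*} [Fintype L] [Fintype R]
    (n d : ℕ)
    (hn : 0 < n) (hd : 0 < d)
    (G : L → R → Prop)
    (ordL : ∀ ℓ : L, Fin d ≃ {r : R // G ℓ r})
    (lam δin δout : ℝ) (hlam : 0 ≤ lam) (hδout : 0 < δout)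
    (hEML : ∀ (S : Finset L) (T : Finset R),
      |(eCount G S T : ℝ) - ((d : ℝ) / n) * S.card * T.card| ≤ lam * d * n)
    (Cin : Set (Fin d → Ain)) (Cout : Set (L → Aout))
    (Enc : Aout → (Fin d → Ain)) (hEncInj : Function.Injective Enc)
    (hEncMem : ∀ σ, Enc σ ∈ Cin)
    (hCinDist : ∀ c ∈ Cin, ∀ c' ∈ Cin, c ≠ c' →
      δin * d ≤ ((Finset.univ.filter fun k : Fin d => c k ≠ c' k).card : ℝ))
    (hCoutDist : ∀ f ∈ Cout, ∀ f' ∈ Cout, f ≠ f' →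
      δout * n ≤ ((Finset.univ.filter fun ℓ : L => f ℓ ≠ f' ℓ).card : ℝ))
    (h₁ h₂ : L → R → Ain) (f₁ f₂ : L → Aout)
    (hf₁ : f₁ ∈ Cout) (hf₂ : f₂ ∈ Cout)
    (henc₁ : ∀ (ℓ : L) (k : Fin d), h₁ ℓ (ordL ℓ k).1 = Enc (f₁ ℓ) k)
    (henc₂ : ∀ (ℓ : L) (k : Fin d), h₂ ℓ (ordL ℓ k).1 = Enc (f₂ ℓ) k)
    (hne : ∃ ℓ r, G ℓ r ∧ h₁ ℓ r ≠ h₂ ℓ r) :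
    (δin - lam / δout) * n ≤
      ((Finset.univ.filter fun r : R => ∃ ℓ, G ℓ r ∧ h₁ ℓ r ≠ h₂ ℓ r).card : ℝ) := by
  set S : Finset L := {ℓ | f₁ ℓ ≠ f₂ ℓ}
  set T : Finset R := {r | ∃ ℓ, G ℓ r ∧ h₁ ℓ r ≠ h₂ ℓ r}
  have hS : δout * n ≤ #S := hCoutDist f₁ hf₁ f₂ hf₂ (ne_of_exists_edge_ne henc₁ henc₂ hne)
  have hlocal : ∀ ℓ ∈ S, δin * d ≤ #{r ∈ T | G ℓ r} := by
    intro ℓ hℓ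
    have hEnc : Enc (f₁ ℓ) ≠ Enc (f₂ ℓ) := hEncInj.ne (mem_filter.mp hℓ).2
    calc δin * d ≤ #{k | Enc (f₁ ℓ) k ≠ Enc (f₂ ℓ) k} :=
          hCinDist _ (hEncMem _) _ (hEncMem _) hEnc
      _ = #{r | G ℓ r ∧ h₁ ℓ r ≠ h₂ ℓ r} := by rw [card_edge_ne_eq_card_enc_ne henc₁ henc₂]
      _ ≤ #{r ∈ T | G ℓ r} := by
          gcongr
          intro r hr
          simp only [T, mem_filter, mem_univ, true_and] at hr ⊢
          exact ⟨⟨ℓ, hr⟩, hr.1⟩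
  have hupper := (abs_le.mp (hEML S T)).2
  exact sub_div_mul_le_of_mixing_bound hlam hδout (Nat.cast_pos.mpr hn) (Nat.cast_pos.mpr hd) hS
    (by linarith [mul_card_le_eCount hlocal])

/-- Distance of AEL codes: let `G = (L,R,E)` be an `(n,d,λ)`-expander (a `d`-regular bipartite
graph, with a fixed ordering `ordL` of the edges at each left vertex, satisfying the expander
mixing lemma), `Cout` an outer code on `L` of distance `δout > 0`, and `Cin ⊆ Ain^d` an inner
code of distance `δin`, with encoding map `Enc : Aout → Cin`. If `h₁, h₂` are AEL codewords
(edge labelings whose left local views are the `Enc`-encodings of outer codewords `f₁, f₂`)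
that differ on some edge, then the fraction of right vertices where they differ is at least
`δin - λ/δout`. -/
theorem ael_distance {L R Aout Ain : Type*} [Fintype L] [Fintype R]
    (n d : ℕ) (hL : Fintype.card L = n) (hR : Fintype.card R = n)
    (hn : 0 < n) (hd : 0 < d)
    (G : L → R → Prop)
    (ordL : ∀ ℓ : L, Fin d ≃ {r : R // G ℓ r})
    (lam δin δout : ℝ) (hlam : 0 ≤ lam) (hδout : 0 < δout)
    (hEML : ∀ (S : Finset L) (T : Finset R),
      |(eCount G S T : ℝ) - ((d : ℝ) / n) * S.card * T.card| ≤ lam * d * n)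
    (Cin : Set (Fin d → Ain)) (Cout : Set (L → Aout))
    (Enc : Aout → (Fin d → Ain)) (hEncInj : Function.Injective Enc)
    (hEncMem : ∀ σ, Enc σ ∈ Cin)
    (hCinDist : ∀ c ∈ Cin, ∀ c' ∈ Cin, c ≠ c' →
      δin * d ≤ ((Finset.univ.filter fun k : Fin d => c k ≠ c' k).card : ℝ))
    (hCoutDist : ∀ f ∈ Cout, ∀ f' ∈ Cout, f ≠ f' →
      δout * n ≤ ((Finset.univ.filter fun ℓ : L => f ℓ ≠ f' ℓ).card : ℝ))
    (h₁ h₂ : L → R → Ain) (f₁ f₂ : L → Aout)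
    (hf₁ : f₁ ∈ Cout) (hf₂ : f₂ ∈ Cout)
    (henc₁ : ∀ (ℓ : L) (k : Fin d), h₁ ℓ (ordL ℓ k).1 = Enc (f₁ ℓ) k)
    (henc₂ : ∀ (ℓ : L) (k : Fin d), h₂ ℓ (ordL ℓ k).1 = Enc (f₂ ℓ) k)
    (hne : ∃ ℓ r, G ℓ r ∧ h₁ ℓ r ≠ h₂ ℓ r) :
    (δin - lam / δout) * n ≤
      ((Finset.univ.filter fun r : R => ∃ ℓ, G ℓ r ∧ h₁ ℓ r ≠ h₂ ℓ r).card : ℝ) :=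
  ael_distance_general n d hn hd G ordL lam δin δout hlam hδout hEML Cin Cout Enc hEncInj hEncMem
    hCinDist hCoutDist h₁ h₂ f₁ f₂ hf₁ hf₂ henc₁ henc₂ hne
end

section
/- (One iteration of Tanner error correction contracts errors) Let $G=(L,R,E)$ be an $(n,d,\lambda)$-expander and let ${\mathcal C}_1 \subseteq \Sigma^d$ have distance $\delta_L$. Let $h \in \Sigma^E$ be an edge labeling with $h_\ell \in {\mathcal C}_1$ for all $\ell \in L$, and let $g \in \Sigma^E$ be another labeling with $g_\ell \in {\mathcal C}_1$ for all $\ell$. Let $R' = \{r \in R : g_r \ne h_r\}$ and suppose $|R'| \le (\delta_L/4) n$. Define $g' \in \Sigma^E$ by setting, for each $\ell \in L$, $g'_\ell$ to be a codeword of ${\mathcal C}_1$ at distance less than $\delta_L/2$ from the word obtained from $g$ at $\ell$ if one exists (in particular $g'_\ell = h_\ell$ whenever fewer than $(\delta_L/2) d$ edges at $\ell$ go to $R'$). Then the set $L'$ of left vertices $\ell$ with $g'_\ell \ne h_\ell$ satisfies $|L'| \le \frac{16\lambda^2}{\delta_L^2} |R'|$. -/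
open Finset

open scoped Classical

lemma tanner_aux (δL lam x y s : ℝ) (hδ : 0 < δL) (hx : 0 < x) (hy : 0 ≤ y)
    (hs : s ^ 2 = x * y) (hkey : δL / 4 * x ≤ lam * s) (hsnn : 0 ≤ s) :
    x ≤ 16 * lam ^ 2 / δL ^ 2 * y := by
  have hsq1 : (δL / 4 * x) ^ 2 ≤ (lam * s) ^ 2 :=
    pow_le_pow_left₀ (by positivity) hkey 2
  have hsq2 : (lam * s) ^ 2 = lam ^ 2 * (x * y) := by rw [mul_pow, hs]
  have hfin : δL ^ 2 * x ≤ 16 * lam ^ 2 * y := by nlinarith [hsq1, hsq2, hx]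
  rw [div_mul_eq_mul_div, le_div_iff₀ (by positivity)]
  nlinarith [hfin]

/-- One iteration of Tanner error correction contracts errors: let `G` be an
`(n,d,λ)`-expander (with strong mixing), `C₁ ⊆ Σ^d` a code of distance `δL`, `h` an edge
labeling with all left local views in `C₁`, and `g` another labeling with all left local
views in `C₁`.  Let `R'` be the set of right vertices where `g` and `h` disagree, with
`|R'| ≤ (δL/4)n`.  If `g'` assigns to each left vertex a codeword of `C₁` at distance less
than `(δL/2)d` from the local view of `g` whenever such a codeword exists, then the set of
left vertices where `g'` differs from the local view of `h` has size at most
`(16λ²/δL²)|R'|`. -/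
theorem tanner_iteration_contracts {L R A : Type*} [Fintype L] [Fintype R]
    (n d : ℕ) (hL : Fintype.card L = n) (hR : Fintype.card R = n)
    (G : L → R → Prop)
    (ordL : ∀ ℓ : L, Fin d ≃ {r : R // G ℓ r})
    (lam δL : ℝ) (hδL : 0 < δL) (hlam : 0 ≤ lam)
    (hEML : ∀ (S : Finset L) (T : Finset R),
      |(eCount G S T : ℝ) - ((d : ℝ) / n) * S.card * T.card| ≤
        lam * d * Real.sqrt ((S.card : ℝ) * T.card))
    (C₁ : Set (Fin d → A))
    (hC₁ : ∀ c ∈ C₁, ∀ c' ∈ C₁, c ≠ c' →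
      δL * d ≤ ((Finset.univ.filter fun k : Fin d => c k ≠ c' k).card : ℝ))
    (h g : L → R → A)
    (hhC : ∀ ℓ : L, (fun k => h ℓ (ordL ℓ k).1) ∈ C₁)
    (hgC : ∀ ℓ : L, (fun k => g ℓ (ordL ℓ k).1) ∈ C₁)
    (R' : Finset R)
    (hR'def : R' = Finset.univ.filter fun r : R => ∃ ℓ, G ℓ r ∧ g ℓ r ≠ h ℓ r)
    (hR'small : (R'.card : ℝ) ≤ (δL / 4) * n)
    (g' : L → Fin d → A)
    (hdec : ∀ ℓ : L,
      (∃ c ∈ C₁,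
        ((Finset.univ.filter fun k : Fin d => c k ≠ g ℓ (ordL ℓ k).1).card : ℝ) < δL / 2 * d) →
      g' ℓ ∈ C₁ ∧
        ((Finset.univ.filter fun k : Fin d => g' ℓ k ≠ g ℓ (ordL ℓ k).1).card : ℝ) <
          δL / 2 * d) :
    ((Finset.univ.filter fun ℓ : L => g' ℓ ≠ fun k => h ℓ (ordL ℓ k).1).card : ℝ) ≤
      (16 * lam ^ 2 / δL ^ 2) * R'.card := by
  set L' : Finset L := Finset.univ.filter fun ℓ : L => g' ℓ ≠ fun k => h ℓ (ordL ℓ k).1 with hL'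
  have hRHSpos : (0:ℝ) ≤ (16 * lam ^ 2 / δL ^ 2) * R'.card := by positivity
  rcases Nat.eq_zero_or_pos d with hd | hd
  · -- d = 0 : all functions Fin d → A are equal, so L' = ∅
    subst hd
    have : L' = ∅ := by
      apply Finset.eq_empty_of_forall_notMem
      intro ℓ hℓ
      simp only [hL', Finset.mem_filter] at hℓ
      exact hℓ.2 (funext fun k => k.elim0)
    rw [this]; simpa using hRHSpos
  rcases Finset.eq_empty_or_nonempty L' with hLe | hLne
  · rw [hLe]; simpa using hRHSpos
  -- key claim: every ℓ ∈ L' has at least (δL/2)d neighbors in R'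
  have key : ∀ ℓ ∈ L',
      δL / 2 * d ≤ ((Finset.univ.filter fun k : Fin d => (ordL ℓ k).1 ∈ R').card : ℝ) := by
    intro ℓ hℓ
    by_contra hcon
    push_neg at hcon
    have hsub : (Finset.univ.filter fun k : Fin d => h ℓ (ordL ℓ k).1 ≠ g ℓ (ordL ℓ k).1) ⊆
        (Finset.univ.filter fun k : Fin d => (ordL ℓ k).1 ∈ R') := by
      intro k hk
      simp only [Finset.mem_filter, Finset.mem_univ, true_and] at hk ⊢
      rw [hR'def]
      simp only [Finset.mem_filter, Finset.mem_univ, true_and]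
      exact ⟨ℓ, (ordL ℓ k).2, fun e => hk e.symm⟩
    have hdist : ((Finset.univ.filter fun k : Fin d =>
        h ℓ (ordL ℓ k).1 ≠ g ℓ (ordL ℓ k).1).card : ℝ) < δL / 2 * d :=
      lt_of_le_of_lt (by exact_mod_cast Finset.card_le_card hsub) hcon
    obtain ⟨hg'C, hg'close⟩ := hdec ℓ ⟨_, hhC ℓ, hdist⟩
    -- triangle inequality: dist(g'ℓ, hℓ) < δL * d
    have htri : (Finset.univ.filter fun k : Fin d => g' ℓ k ≠ h ℓ (ordL ℓ k).1) ⊆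
        (Finset.univ.filter fun k : Fin d => g' ℓ k ≠ g ℓ (ordL ℓ k).1) ∪
        (Finset.univ.filter fun k : Fin d => h ℓ (ordL ℓ k).1 ≠ g ℓ (ordL ℓ k).1) := by
      intro k hk
      simp only [Finset.mem_filter, Finset.mem_union, Finset.mem_univ, true_and] at hk ⊢
      by_contra hco
      push_neg at hco
      exact hk (hco.1.trans hco.2.symm)
    have hne : g' ℓ ≠ fun k => h ℓ (ordL ℓ k).1 := by
      simp only [hL', Finset.mem_filter] at hℓ; exact hℓ.2
    have hfar := hC₁ _ hg'C _ (hhC ℓ) hne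
    have hcard : ((Finset.univ.filter fun k : Fin d =>
        g' ℓ k ≠ h ℓ (ordL ℓ k).1).card : ℝ) < δL * d := by
      have h1 : ((Finset.univ.filter fun k : Fin d => g' ℓ k ≠ h ℓ (ordL ℓ k).1).card : ℝ) ≤
          ((Finset.univ.filter fun k : Fin d => g' ℓ k ≠ g ℓ (ordL ℓ k).1).card : ℝ) +
          ((Finset.univ.filter fun k : Fin d => h ℓ (ordL ℓ k).1 ≠ g ℓ (ordL ℓ k).1).card : ℝ) := by
        have := Finset.card_union_le
          (Finset.univ.filter fun k : Fin d => g' ℓ k ≠ g ℓ (ordL ℓ k).1)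
          (Finset.univ.filter fun k : Fin d => h ℓ (ordL ℓ k).1 ≠ g ℓ (ordL ℓ k).1)
        have h2 := Finset.card_le_card htri
        exact_mod_cast le_trans h2 this
      linarith
    have : δL * d ≤ ((Finset.univ.filter fun k : Fin d =>
        g' ℓ k ≠ (fun k => h ℓ (ordL ℓ k).1) k).card : ℝ) := hfar
    simp only at this
    linarith
  -- translate neighbor count to edge count into R'
  have hbij : ∀ ℓ : L, (Finset.univ.filter fun k : Fin d => (ordL ℓ k).1 ∈ R').card =
      (R'.filter fun r => G ℓ r).card := by
    intro ℓ
    apply Finset.card_bij (fun k _ => ((ordL ℓ) k).1)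
    · intro k hk
      simp only [Finset.mem_filter, Finset.mem_univ, true_and] at hk ⊢
      exact ⟨hk, (ordL ℓ k).2⟩
    · intro k₁ h₁ k₂ h₂ he
      exact (ordL ℓ).injective (Subtype.ext he)
    · intro r hr
      simp only [Finset.mem_filter] at hr
      refine ⟨(ordL ℓ).symm ⟨r, hr.2⟩, ?_, by simp⟩
      simp only [Finset.mem_filter, Finset.mem_univ, true_and, Equiv.apply_symm_apply]
      exact hr.1
  -- edge count formula
  have hsum : (eCount G L' R' : ℝ) = ∑ ℓ ∈ L', ((R'.filter fun r => G ℓ r).card : ℝ) := by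
    unfold eCount
    push_cast
    rw [Finset.card_filter, Finset.sum_product]
    push_cast
    congr 1
    ext ℓ
    rw [Finset.card_filter]
    push_cast
    rfl
  -- lower bound on edge count
  have hlow : (L'.card : ℝ) * (δL / 2 * d) ≤ (eCount G L' R' : ℝ) := by
    rw [hsum]
    calc (L'.card : ℝ) * (δL / 2 * d) = ∑ _ℓ ∈ L', (δL / 2 * d) := by
          rw [Finset.sum_const, nsmul_eq_mul]
      _ ≤ ∑ ℓ ∈ L', ((R'.filter fun r => G ℓ r).card : ℝ) := by
          apply Finset.sum_le_sum
          intro ℓ hℓ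
          rw [← hbij ℓ]
          exact key ℓ hℓ
  -- upper bound from mixing
  have hup := hEML L' R'
  have hup' : (eCount G L' R' : ℝ) ≤ ((d : ℝ) / n) * L'.card * R'.card +
      lam * d * Real.sqrt ((L'.card : ℝ) * R'.card) := by
    have := abs_le.mp hup
    linarith [this.2]
  -- n > 0 since L' nonempty
  have hn : 0 < (n : ℝ) := by
    have : 0 < Fintype.card L := Fintype.card_pos_iff.mpr ⟨hLne.choose⟩
    rw [hL] at this
    exact_mod_cast this
  set x : ℝ := (L'.card : ℝ) with hx
  set y : ℝ := (R'.card : ℝ) with hy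
  have hxpos : 0 < x := by
    rw [hx]
    exact_mod_cast Finset.card_pos.mpr hLne
  have hypos : 0 ≤ y := by positivity
  have hdpos : (0:ℝ) < d := by exact_mod_cast hd
  -- from y ≤ δL/4 * n : (d/n) x y ≤ δL/4 * d * x
  have hmid : ((d:ℝ)/n) * x * y ≤ δL / 4 * d * x := by
    rw [div_mul_eq_mul_div, div_mul_eq_mul_div, div_le_iff₀ hn]
    have : (d:ℝ) * x * y ≤ (d:ℝ) * x * (δL / 4 * n) := by
      apply mul_le_mul_of_nonneg_left hR'small (by positivity)
    nlinarith
  have hkey2 : δL / 4 * d * x ≤ lam * d * Real.sqrt (x * y) := by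
    nlinarith [hlow, hup', hmid]
  -- divide by d
  have hkey3 : δL / 4 * x ≤ lam * Real.sqrt (x * y) := by
    have := mul_le_mul_of_nonneg_right hkey2 (le_of_lt (inv_pos.mpr hdpos))
    calc δL / 4 * x = δL / 4 * d * x * (d:ℝ)⁻¹ := by field_simp
      _ ≤ lam * d * Real.sqrt (x * y) * (d:ℝ)⁻¹ := this
      _ = lam * Real.sqrt (x * y) := by field_simp
  exact tanner_aux δL lam x y (Real.sqrt (x * y)) hδL hxpos hypos
    (Real.sq_sqrt (by positivity)) hkey3 (Real.sqrt_nonneg _)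
end
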